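/- The map λ on covering relations of the cubic coordinate poset CC(n), defined by λ(c, c') := (ε, i, c_i) where i is the unique index with c_i < c'_i and ε = -1 if c_i < 0 and ε = 1 otherwise, with labels in ℤ^3 ordered lexicographically, is an EL-labeling: for every pair c ≤ c' in CC(n) there is exactly one λ-increasing saturated chain from c to c', and this chain is lexicographically minimal among all saturated chains from c to c'. -/
import Mathlib


/-- A Tamari diagram of size `n` (0-indexed: entry `i` corresponds to letter `i+1`). -/
def IsTD {n : ℕ} (u : Fin n → ℕ) : Prop :=
  (∀ i : Fin n, u i ≤ n - (i.val + 1)) ∧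
  (∀ i j : Fin n, i.val ≤ j.val → j.val - i.val ≤ u i → u j ≤ u i - (j.val - i.val))

/-- A dual Tamari diagram of size `n`. -/
def IsDTD {n : ℕ} (v : Fin n → ℕ) : Prop :=
  (∀ i : Fin n, v i ≤ i.val) ∧
  (∀ i j : Fin n, j.val ≤ i.val → i.val - j.val ≤ v i → v j ≤ v i - (i.val - j.val))

/-- Compatibility of a Tamari diagram and a dual Tamari diagram. -/
def Compatible {n : ℕ} (u v : Fin n → ℕ) : Prop :=
  ∀ i j : Fin n, i < j → j.val - i.val ≤ u i → v j < j.val - i.val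

/-- Tamari interval diagram. -/
def IsTID {n : ℕ} (u v : Fin n → ℕ) : Prop := IsTD u ∧ IsDTD v ∧ Compatible u v

/-- The Tamari diagram associated with a tuple `c` (u_i = max(c_i,0), u_n = 0). -/
def ccU (n : ℕ) (c : Fin (n - 1) → ℤ) : Fin n → ℕ :=
  fun i => if h : i.val < n - 1 then (c ⟨i.val, h⟩).toNat else 0

/-- The dual Tamari diagram associated with a tuple `c` (v_1 = 0, v_{i+1} = |min(c_i,0)|). -/
def ccV (n : ℕ) (c : Fin (n - 1) → ℤ) : Fin n → ℕ :=
  fun i => if h : 0 < i.val then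
    (-(c ⟨i.val - 1, by have := i.isLt; omega⟩)).toNat else 0

/-- Cubic coordinate of size `n`: a tuple of `n-1` integers whose associated pair of words
is a Tamari interval diagram. -/
def IsCC (n : ℕ) (c : Fin (n - 1) → ℤ) : Prop := IsTID (ccU n c) (ccV n c)

/-- The relation `◁` induced by a Tamari interval diagram: `tidRel u v a b` means `x_a ◁ x_b`. -/
def tidRel {n : ℕ} (u v : Fin n → ℕ) (a b : Fin n) : Prop :=
  (b.val ≤ a.val ∧ a.val - b.val ≤ u b) ∨ (a.val ≤ b.val ∧ b.val - a.val ≤ v b)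

/-- Covering relation in the poset of cubic coordinates of size `n`. -/
def CCCovers (n : ℕ) (c c' : Fin (n - 1) → ℤ) : Prop :=
  IsCC n c ∧ IsCC n c' ∧ c ≤ c' ∧ c ≠ c' ∧
  ¬ ∃ e : Fin (n - 1) → ℤ, IsCC n e ∧ c ≤ e ∧ e ≤ c' ∧ e ≠ c ∧ e ≠ c'

/-- A saturated chain of length `k` from `c` to `c'` in `CC(n)`. -/
def IsSatChain (n k : ℕ) (f : ℕ → (Fin (n - 1) → ℤ)) (c c' : Fin (n - 1) → ℤ) : Prop :=
  f 0 = c ∧ f k = c' ∧ ∀ t < k, CCCovers n (f t) (f (t + 1))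

/-- `ℓ` is the label word of the saturated chain `f` of length `k`: the label of a cover
is `(ε, i, c_i)` where `i` is the unique increasing component and `ε = -1` iff `c_i < 0`. -/
def IsLabelWord (n k : ℕ) (f : ℕ → (Fin (n - 1) → ℤ)) (ℓ : ℕ → ℤ × ℤ × ℤ) : Prop :=
  ∀ t < k, ∃ i : Fin (n - 1), f t i < f (t + 1) i ∧ (∀ j, j ≠ i → f t j = f (t + 1) j) ∧
    ℓ t = ((if f t i < 0 then -1 else 1), ((i.val : ℤ) + 1, f t i))

/-- Strict lexicographic order on labels in `ℤ³`. -/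
def Lt3 (a b : ℤ × ℤ × ℤ) : Prop :=
  a.1 < b.1 ∨ (a.1 = b.1 ∧ (a.2.1 < b.2.1 ∨ (a.2.1 = b.2.1 ∧ a.2.2 < b.2.2)))

/-- Lexicographic comparison of label words (of possibly different lengths). -/
def LexLE (k k' : ℕ) (ℓ ℓ' : ℕ → ℤ × ℤ × ℤ) : Prop :=
  (k ≤ k' ∧ ∀ t < k, ℓ t = ℓ' t) ∨
  (∃ t, t < k ∧ t < k' ∧ (∀ s < t, ℓ s = ℓ' s) ∧ Lt3 (ℓ t) (ℓ' t))

/-- Integer-conditions characterization of `IsCC`. -/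
def Pcond (n : ℕ) (c : Fin (n - 1) → ℤ) : Prop :=
  ∀ a b : Fin (n - 1),
    (-(a.val + 1 : ℤ) ≤ c a ∧ c a ≤ (n : ℤ) - 1 - a.val) ∧
    (a.val < b.val →
      (((b.val : ℤ) - a.val) ≤ c a → c b ≤ c a - ((b.val : ℤ) - a.val)) ∧
      (c b ≤ -((b.val : ℤ) - a.val) → c b + ((b.val : ℤ) - a.val) ≤ c a) ∧
      (((b.val : ℤ) - a.val) + 1 ≤ c a → -((b.val : ℤ) - a.val) ≤ c b))


lemma ccU_eq {n : ℕ} (c : Fin (n - 1) → ℤ) (a : Fin (n - 1)) (i : Fin n) (h : i.val = a.val) :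
    ccU n c i = (c a).toNat := by
  have h1 : i.val < n - 1 := h ▸ a.isLt
  simp only [ccU, dif_pos h1]
  have he : (⟨i.val, h1⟩ : Fin (n-1)) = a := Fin.ext h
  rw [he]

lemma ccU_ge {n : ℕ} (c : Fin (n - 1) → ℤ) (i : Fin n) (h : ¬ i.val < n - 1) :
    ccU n c i = 0 := by simp [ccU, h]

lemma ccV_eq {n : ℕ} (c : Fin (n - 1) → ℤ) (a : Fin (n - 1)) (i : Fin n) (h : i.val = a.val + 1) :
    ccV n c i = (-(c a)).toNat := by
  have h1 : 0 < i.val := by omega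
  simp only [ccV, dif_pos h1]
  have he : (⟨i.val - 1, by have := i.isLt; omega⟩ : Fin (n-1)) = a := Fin.ext (show i.val - 1 = a.val from by omega)
  rw [he]

lemma ccV_zero {n : ℕ} (c : Fin (n - 1) → ℤ) (i : Fin n) (h : ¬ 0 < i.val) :
    ccV n c i = 0 := by simp [ccV, h]

lemma isCC_iff (n : ℕ) (c : Fin (n - 1) → ℤ) : IsCC n c ↔ Pcond n c := by
  constructor
  · rintro ⟨⟨hU1, hU2⟩, ⟨hV1, hV2⟩, hCom⟩ a b
    have ha := a.isLt
    have hb := b.isLt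
    have hn : 2 ≤ n := by omega
    refine ⟨⟨?_, ?_⟩, fun hab => ⟨?_, ?_, ?_⟩⟩
    · have h1 := hV1 ⟨a.val + 1, by omega⟩
      have e1 := ccV_eq c a ⟨a.val + 1, by omega⟩ rfl
      simp only [e1] at h1
      omega
    · have h1 := hU1 ⟨a.val, by omega⟩
      have e1 := ccU_eq c a ⟨a.val, by omega⟩ rfl
      simp only [e1] at h1
      omega
    · -- T
      intro h1
      have h2 := hU2 ⟨a.val, by omega⟩ ⟨b.val, by omega⟩ hab.le
      have e1 := ccU_eq c a ⟨a.val, by omega⟩ rfl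
      have e2 := ccU_eq c b ⟨b.val, by omega⟩ rfl
      simp only [e1, e2] at h2
      omega
    · -- D
      intro h1
      have h2 := hV2 ⟨b.val + 1, by omega⟩ ⟨a.val + 1, by omega⟩ (Nat.succ_le_succ hab.le)
      have e1 := ccV_eq c a ⟨a.val + 1, by omega⟩ rfl
      have e2 := ccV_eq c b ⟨b.val + 1, by omega⟩ rfl
      simp only [e1, e2] at h2
      omega
    · -- C
      intro h1
      have h2 := hCom ⟨a.val, by omega⟩ ⟨b.val + 1, by omega⟩ (Fin.mk_lt_mk.mpr (by omega))
      have e1 := ccU_eq c a ⟨a.val, by omega⟩ rfl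
      have e2 := ccV_eq c b ⟨b.val + 1, by omega⟩ rfl
      simp only [e1, e2] at h2
      omega
  · intro hP
    refine ⟨⟨?_, ?_⟩, ⟨?_, ?_⟩, ?_⟩
    · intro i
      by_cases h : i.val < n - 1
      · have e1 := ccU_eq c ⟨i.val, h⟩ i rfl
        have h1 := (hP ⟨i.val, h⟩ ⟨i.val, h⟩).1
        simp only at h1
        omega
      · rw [ccU_ge c i h]; omega
    · intro i j hij h
      by_cases hj : j.val < n - 1
      · have hi : i.val < n - 1 := by omega
        have e1 := ccU_eq c ⟨i.val, hi⟩ i rfl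
        have e2 := ccU_eq c ⟨j.val, hj⟩ j rfl
        rcases Nat.eq_or_lt_of_le hij with heq | hlt
        · have he : (⟨i.val, hi⟩ : Fin (n-1)) = ⟨j.val, hj⟩ := Fin.ext heq
          rw [he] at e1
          omega
        · have h2 := (hP ⟨i.val, hi⟩ ⟨j.val, hj⟩).2 hlt
          simp only at h2
          omega
      · rw [ccU_ge c j hj]; omega
    · intro i
      by_cases h : 0 < i.val
      · have hlt : i.val - 1 < n - 1 := by have := i.isLt; omega
        have e1 := ccV_eq c ⟨i.val - 1, hlt⟩ i (show i.val = i.val - 1 + 1 from by omega)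
        have h1 := (hP ⟨i.val - 1, hlt⟩ ⟨i.val - 1, hlt⟩).1
        simp only at h1
        omega
      · rw [ccV_zero c i h]; omega
    · intro i j hji h
      by_cases hj : 0 < j.val
      · have hi : 0 < i.val := by omega
        have hlti : i.val - 1 < n - 1 := by have := i.isLt; omega
        have hltj : j.val - 1 < n - 1 := by have := j.isLt; omega
        have e1 := ccV_eq c ⟨i.val - 1, hlti⟩ i (show i.val = i.val - 1 + 1 from by omega)
        have e2 := ccV_eq c ⟨j.val - 1, hltj⟩ j (show j.val = j.val - 1 + 1 from by omega)
        rcases Nat.eq_or_lt_of_le hji with heq | hlt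
        · have he : (⟨j.val - 1, hltj⟩ : Fin (n-1)) = ⟨i.val - 1, hlti⟩ := Fin.ext (show j.val - 1 = i.val - 1 from by omega)
          rw [he] at e2
          omega
        · have h2 := (hP ⟨j.val - 1, hltj⟩ ⟨i.val - 1, hlti⟩).2 (show j.val - 1 < i.val - 1 from by omega)
          simp only at h2
          omega
      · rw [ccV_zero c j hj]; omega
    · intro i j hij h
      rw [Fin.lt_def] at hij
      by_cases hi : i.val < n - 1
      · have hj : 0 < j.val := by omega
        have hltj : j.val - 1 < n - 1 := by have := j.isLt; omega
        have e1 := ccU_eq c ⟨i.val, hi⟩ i rfl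
        have e2 := ccV_eq c ⟨j.val - 1, hltj⟩ j (show j.val = j.val - 1 + 1 from by omega)
        rcases Nat.eq_or_lt_of_le (show i.val ≤ j.val - 1 by omega) with heq | hlt
        · have he : (⟨i.val, hi⟩ : Fin (n-1)) = ⟨j.val - 1, hltj⟩ := Fin.ext heq
          rw [he] at e1
          omega
        · have h2 := (hP ⟨i.val, hi⟩ ⟨j.val - 1, hltj⟩).2 (by simpa using hlt)
          simp only at h2
          omega
      · rw [ccU_ge c i hi] at h
        omega

def lab {n : ℕ} (c : Fin (n - 1) → ℤ) (j : Fin (n - 1)) : ℤ × ℤ × ℤ :=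
  ((if c j < 0 then -1 else 1), ((j.val : ℤ) + 1, c j))

lemma lt3_iff (x1 y1 z1 x2 y2 z2 : ℤ) : Lt3 (x1,(y1,z1)) (x2,(y2,z2)) ↔
    (x1 < x2 ∨ (x1 = x2 ∧ (y1 < y2 ∨ (y1 = y2 ∧ z1 < z2)))) := Iff.rfl

lemma lt3_trans {a b c : ℤ × ℤ × ℤ} (h1 : Lt3 a b) (h2 : Lt3 b c) : Lt3 a c := by
  obtain ⟨a1, a2, a3⟩ := a; obtain ⟨b1, b2, b3⟩ := b; obtain ⟨c1, c2, c3⟩ := c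
  rw [lt3_iff] at *; omega

lemma lt3_asymm {a b : ℤ × ℤ × ℤ} (h1 : Lt3 a b) (h2 : Lt3 b a) : False := by
  obtain ⟨a1, a2, a3⟩ := a; obtain ⟨b1, b2, b3⟩ := b
  rw [lt3_iff] at *; omega

set_option maxHeartbeats 1000000 in
lemma step_pos {n : ℕ} (c d : Fin (n - 1) → ℤ) (hc : Pcond n c) (hd : Pcond n d)
    (hle : ∀ a, c a ≤ d a) (p : Fin (n - 1)) (hpd : c p < d p)
    (hnn : ∀ a, c a < d a → 0 ≤ c a)
    (hmin : ∀ a : Fin (n - 1), a.val < p.val → c a = d a) :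
    Pcond n (Function.update c p (d p)) := by
  intro a b
  have ea : Function.update c p (d p) a = if a = p then (d p) else c a :=
    Function.update_apply c p _ a
  have eb : Function.update c p (d p) b = if b = p then (d p) else c b :=
    Function.update_apply c p _ b
  rcases eq_or_ne a p with hap | hap
  · rw [if_pos hap] at ea
    have hva := congrArg Fin.val hap
    rcases eq_or_ne b p with hbp | hbp
    · rw [if_pos hbp] at eb
      have hvb := congrArg Fin.val hbp
      have Hd4 := hd p p
      have hpl := p.isLt
      rw [ea, eb]
      clear ea eb hap hbp
      omega
    · rw [if_neg hbp] at eb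
      have Hd3 := hd p b
      have Hd4 := hd p p
      have hLb := hle b
      have hNb := hnn b
      rw [ea, eb]
      clear ea eb hap hbp
      omega
  · rw [if_neg hap] at ea
    rcases eq_or_ne b p with hbp | hbp
    · rw [if_pos hbp] at eb
      have hvb := congrArg Fin.val hbp
      have Hc1 := hc a b
      have Hd2 := hd a p
      have hMa := hmin a
      have hNp := hnn p
      have hLa := hle a
      rw [ea, eb]
      clear ea eb hap hbp
      omega
    · rw [if_neg hbp] at eb
      rw [ea, eb]
      exact hc a b

set_option maxHeartbeats 1000000 in
lemma step_neg {n : ℕ} (c d : Fin (n - 1) → ℤ) (hc : Pcond n c) (hd : Pcond n d)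
    (hle : ∀ a, c a ≤ d a) (p : Fin (n - 1)) (hpneg : c p < 0) (hpd : c p < d p)
    (hmin : ∀ a : Fin (n - 1), a.val < p.val → c a < 0 → ¬ c a < d a) :
    Pcond n (Function.update c p (min (d p) 0)) := by
  intro a b
  have ea : Function.update c p (min (d p) 0) a = if a = p then (min (d p) 0) else c a :=
    Function.update_apply c p _ a
  have eb : Function.update c p (min (d p) 0) b = if b = p then (min (d p) 0) else c b :=
    Function.update_apply c p _ b
  rcases eq_or_ne a p with hap | hap
  · rw [if_pos hap] at ea
    have hva := congrArg Fin.val hap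
    rcases eq_or_ne b p with hbp | hbp
    · rw [if_pos hbp] at eb
      have hvb := congrArg Fin.val hbp
      have Hc4 := hc p p
      have hpl := p.isLt
      rw [ea, eb]
      clear ea eb hap hbp
      omega
    · rw [if_neg hbp] at eb
      have Hc3 := hc p b
      have Hc4 := hc p p
      have hpl := p.isLt
      rw [ea, eb]
      clear ea eb hap hbp
      omega
  · rw [if_neg hap] at ea
    rcases eq_or_ne b p with hbp | hbp
    · rw [if_pos hbp] at eb
      have hvb := congrArg Fin.val hbp
      have Hc1 := hc a b
      have Hc2 := hc a p
      have Hd2 := hd a p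
      have hMa := hmin a
      have hLa := hle a
      have hpl := p.isLt
      rw [ea, eb]
      clear ea eb hap hbp
      omega
    · rw [if_neg hbp] at eb
      rw [ea, eb]
      exact hc a b

lemma exists_step (n : ℕ) (c d : Fin (n - 1) → ℤ) (hc : IsCC n c) (hd : IsCC n d)
    (hle : c ≤ d) (hne : c ≠ d) :
    ∃ (p : Fin (n - 1)) (t₀ : ℤ), c p < d p ∧ 0 < t₀ ∧ c p + t₀ ≤ d p ∧
      IsCC n (Function.update c p (c p + t₀)) ∧
      (∀ j, j ≠ p → c j < d j → Lt3 (lab c p) (lab c j)) := by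
  rw [isCC_iff] at hc hd
  rw [Pi.le_def] at hle
  by_cases hneg : ∃ a, c a < 0 ∧ c a < d a
  · set S : Finset (Fin (n-1)) := Finset.univ.filter (fun a => c a < 0 ∧ c a < d a) with hS
    have hSne : S.Nonempty := by
      obtain ⟨a, ha⟩ := hneg
      exact ⟨a, by simp [hS, ha.1, ha.2]⟩
    set p := S.min' hSne with hp
    have hpmem : c p < 0 ∧ c p < d p := by
      have := S.min'_mem hSne
      simpa [hS] using this
    have hplow : ∀ j : Fin (n-1), c j < 0 → c j < d j → p.val ≤ j.val := by
      intro j h1 h2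
      exact S.min'_le j (by simp [hS, h1, h2])
    refine ⟨p, min (d p) 0 - c p, hpmem.2, by omega, by omega, ?_, ?_⟩
    · rw [isCC_iff]
      have heq : c p + (min (d p) 0 - c p) = min (d p) 0 := by omega
      rw [heq]
      exact step_neg c d hc hd hle p hpmem.1 hpmem.2
        (fun a hav h1 h2 => by have := hplow a h1 h2; omega)
    · intro j hj hjd
      simp only [lab]
      rw [lt3_iff]
      split_ifs with h1 h2 h2
      · have := hplow j h2 hjd
        have : p.val < j.val := by
          rcases Nat.lt_or_ge p.val j.val with h | h
          · exact h
          · exfalso; exact hj (Fin.ext (by omega))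
        omega
      · omega
      · omega
      · omega
  · push_neg at hneg
    have hnn : ∀ a, c a < d a → 0 ≤ c a := fun a h => by have := hneg a; omega
    set S : Finset (Fin (n-1)) := Finset.univ.filter (fun a => c a < d a) with hS
    have hSne : S.Nonempty := by
      by_contra h
      apply hne
      funext a
      have : a ∉ S := fun hm => h ⟨a, hm⟩
      simp [hS] at this
      have := hle a
      omega
    set p := S.min' hSne with hp
    have hpmem : c p < d p := by
      have := S.min'_mem hSne
      simpa [hS] using this
    have hplow : ∀ j : Fin (n-1), c j < d j → p.val ≤ j.val := by
      intro j h2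
      exact S.min'_le j (by simp [hS, h2])
    have hpnn : 0 ≤ c p := hnn p hpmem
    refine ⟨p, d p - c p, hpmem, by omega, by omega, ?_, ?_⟩
    · rw [isCC_iff]
      have heq : c p + (d p - c p) = d p := by omega
      rw [heq]
      refine step_pos c d hc hd hle p hpmem hnn ?_
      intro a hav
      have h1 := hle a
      by_contra hne2
      have hlt : c a < d a := by omega
      have := hplow a hlt
      omega
    · intro j hj hjd
      have hjnn : 0 ≤ c j := hnn j hjd
      have hv : p.val < j.val := by
        have := hplow j hjd
        rcases Nat.lt_or_ge p.val j.val with h | h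
        · exact h
        · exfalso; exact hj (Fin.ext (by omega))
      simp only [lab]
      rw [lt3_iff]
      split_ifs <;> omega

instance (n : ℕ) (c : Fin (n - 1) → ℤ) : Decidable (IsCC n c) := by
  unfold IsCC IsTID IsTD IsDTD Compatible
  infer_instance

lemma lab_lt_same {n : ℕ} (c e : Fin (n - 1) → ℤ) (j : Fin (n - 1)) (h : c j < e j) :
    Lt3 (lab c j) (lab e j) := by
  simp only [lab]
  rw [lt3_iff]
  split_ifs <;> omega

lemma chain_le {n k : ℕ} {f : ℕ → (Fin (n - 1) → ℤ)} {c d : Fin (n - 1) → ℤ}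
    (h : IsSatChain n k f c d) : ∀ t ≤ k, f t ≤ d := by
  have step : ∀ t < k, f t ≤ f (t + 1) := fun t ht => (h.2.2 t ht).2.2.1
  have main : ∀ j t, t + j ≤ k → f t ≤ f (t + j) := by
    intro j
    induction j with
    | zero => intro t _; exact le_refl _
    | succ m ih =>
      intro t ht
      calc f t ≤ f (t + m) := ih t (by omega)
        _ ≤ f (t + m + 1) := step (t + m) (by omega)
  intro t ht
  have := main (k - t) t (by omega)
  rw [show t + (k - t) = k by omega, h.2.1] at this
  exact this

lemma lt3_chain {k : ℕ} (ℓ : ℕ → ℤ × ℤ × ℤ) (h : ∀ t, t + 1 < k → Lt3 (ℓ t) (ℓ (t + 1))) :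
    ∀ s t, s < t → t < k → Lt3 (ℓ s) (ℓ t) := by
  have main : ∀ t, t < k → ∀ s, s < t → Lt3 (ℓ s) (ℓ t) := by
    intro t
    induction t with
    | zero => intro _ s hs; omega
    | succ m ih =>
      intro hm s hs
      rcases Nat.lt_or_ge s m with h1 | h1
      · exact lt3_trans (ih (by omega) s h1) (h m hm)
      · have : s = m := by omega
        subst this
        exact h s hm
  intro s t hst htk
  exact main t htk s hst

set_option maxHeartbeats 2000000 in
theorem main_good (n : ℕ) : ∀ (N : ℕ) (c d : Fin (n - 1) → ℤ),
    (∑ a, (d a - c a).toNat) = N → IsCC n c → IsCC n d → c ≤ d →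
    ∃ k f ℓ, IsSatChain n k f c d ∧ IsLabelWord n k f ℓ ∧
      (∀ t, t + 1 < k → Lt3 (ℓ t) (ℓ (t + 1))) ∧
      (∀ k' f' ℓ', IsSatChain n k' f' c d → IsLabelWord n k' f' ℓ' →
        (∀ t, t + 1 < k' → Lt3 (ℓ' t) (ℓ' (t + 1))) → k' = k ∧ ∀ t ≤ k, f' t = f t) ∧
      (∀ k' f' ℓ', IsSatChain n k' f' c d → IsLabelWord n k' f' ℓ' → LexLE k k' ℓ ℓ') ∧
      (k = 0 ↔ c = d) ∧
      (0 < k → ∃ j, ℓ 0 = lab c j ∧ c j < d j) := by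
  intro N
  induction N using Nat.strong_induction_on with
  | _ N IH =>
  intro c d hN hc hd hle
  by_cases hcd : c = d
  · subst hcd
    refine ⟨0, fun _ => c, fun _ => (0, 0, 0),
      ⟨rfl, rfl, fun t ht => absurd ht (by omega)⟩,
      fun t ht => absurd ht (by omega),
      fun t ht => absurd ht (by omega), ?_, ?_, by simp, fun h => absurd h (by omega)⟩
    · intro k' f' ℓ' hsc hlw hinc
      have hk0 : k' = 0 := by
        by_contra hk
        have h1 : 0 < k' := Nat.pos_of_ne_zero hk
        have hcov := hsc.2.2 0 h1
        have hle1 : f' 1 ≤ c := chain_le hsc 1 h1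
        have hge1 : f' 0 ≤ f' 1 := hcov.2.2.1
        apply hcov.2.2.2.1
        rw [hsc.1]
        exact le_antisymm (hsc.1 ▸ hge1) hle1
      refine ⟨hk0, fun t ht => ?_⟩
      have : t = 0 := by omega
      subst this
      exact hsc.1
    · intro k' f' ℓ' _ _
      exact Or.inl ⟨Nat.zero_le _, fun t ht => absurd ht (by omega)⟩
  · -- inductive step
    obtain ⟨p, t₀, hpd, ht₀pos, ht₀le, hCCt₀, hminlab⟩ := exists_step n c d hc hd hle hcd
    have hle' := Pi.le_def.mp hle
    have hex : ∃ t : ℕ, 0 < t ∧ IsCC n (Function.update c p (c p + (t : ℤ))) := by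
      refine ⟨t₀.toNat, by omega, ?_⟩
      rw [Int.toNat_of_nonneg (by omega : (0:ℤ) ≤ t₀)]
      exact hCCt₀
    have hδex : ∃ m : ℕ, ((0:ℕ) < m ∧ IsCC n (Function.update c p (c p + (m : ℤ)))) ∧
        ∀ l : ℕ, l < m → ¬((0:ℕ) < l ∧ IsCC n (Function.update c p (c p + (l : ℤ)))) :=
      ⟨Nat.find hex, Nat.find_spec hex, fun l hl => Nat.find_min hex hl⟩
    obtain ⟨δN, ⟨hδpos, hCCe⟩, hδmin⟩ := hδex
    have hδle : (δN : ℤ) ≤ t₀ := by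
      by_contra hcon
      exact hδmin t₀.toNat (by omega)
        ⟨by omega, by rw [Int.toNat_of_nonneg (by omega : (0:ℤ) ≤ t₀)]; exact hCCt₀⟩
    have heex : ∃ e', e' = Function.update c p (c p + (δN : ℤ)) := ⟨_, rfl⟩
    obtain ⟨e, he⟩ := heex
    rw [← he] at hCCe
    have hep : e p = c p + (δN : ℤ) := by rw [he]; exact Function.update_self p _ c
    have hej : ∀ j, j ≠ p → e j = c j := fun j hj => by rw [he]; exact Function.update_of_ne hj _ c
    have hce : c ≤ e := by
      intro j
      show c j ≤ e j
      by_cases hj : j = p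
      · subst hj; rw [hep]; omega
      · rw [hej j hj]
    have hed : e ≤ d := by
      intro j
      show e j ≤ d j
      by_cases hj : j = p
      · subst hj; rw [hep]; have := hle' j; omega
      · rw [hej j hj]; exact hle' j
    have hcne : c ≠ e := by
      intro h
      have := congrFun h p
      rw [hep] at this
      omega
    have hcov : CCCovers n c e := by
      refine ⟨hc, hCCe, hce, hcne, ?_⟩
      rintro ⟨e₁, hCC1, h1, h2, h3, h4⟩
      have h5 : ∀ j, j ≠ p → e₁ j = c j := by
        intro j hj
        have ha : c j ≤ e₁ j := h1 j
        have hb : e₁ j ≤ e j := h2 j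
        rw [hej j hj] at hb
        omega
      have h6 : e₁ p ≠ c p := by
        intro hq
        apply h3
        funext j
        by_cases hj : j = p
        · subst hj; exact hq
        · exact h5 j hj
      have h7 : c p < e₁ p := lt_of_le_of_ne (h1 p) (Ne.symm h6)
      have h8 : e₁ p < c p + (δN : ℤ) := by
        have hb : e₁ p ≤ e p := h2 p
        rw [hep] at hb
        rcases lt_or_eq_of_le hb with h | h
        · exact h
        · exfalso
          apply h4
          funext j
          by_cases hj : j = p
          · subst hj; rw [hep]; exact h
          · rw [hej j hj]; exact h5 j hj
      have h9 : Function.update c p (c p + (((e₁ p - c p).toNat : ℕ) : ℤ)) = e₁ := by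
        funext j
        by_cases hj : j = p
        · subst hj
          rw [Function.update_self]
          omega
        · rw [Function.update_of_ne hj]
          exact (h5 j hj).symm
      exact hδmin ((e₁ p - c p).toNat) (by omega) ⟨by omega, by rw [h9]; exact hCC1⟩
    have hNe : (∑ a, (d a - e a).toNat) < N := by
      rw [← hN]
      apply Finset.sum_lt_sum
      · intro i _
        by_cases hi : i = p
        · subst hi; rw [hep]; omega
        · rw [hej i hi]
      · refine ⟨p, Finset.mem_univ p, ?_⟩
        rw [hep]
        have := hle' p
        omega
    obtain ⟨k₀, f₀, ℓ₀, hsc₀, hlw₀, hinc₀, huniq₀, hmin₀, hiff₀, hfirst₀⟩ :=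
      IH _ hNe e d rfl hCCe hd hed
    have hfex : ∃ g : ℕ → (Fin (n - 1) → ℤ), g = fun t => if t = 0 then c else f₀ (t - 1) :=
      ⟨_, rfl⟩
    obtain ⟨f, hf⟩ := hfex
    have hℓex : ∃ g : ℕ → ℤ × ℤ × ℤ, g = fun t => if t = 0 then lab c p else ℓ₀ (t - 1) :=
      ⟨_, rfl⟩
    obtain ⟨ℓ, hℓ⟩ := hℓex
    have hf0 : f 0 = c := by simp [hf]
    have hfs : ∀ t, 1 ≤ t → f t = f₀ (t - 1) := by
      intro t ht
      simp only [hf]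
      rw [if_neg (by omega : ¬ t = 0)]
    have hf1 : f 1 = e := by rw [hfs 1 le_rfl]; exact hsc₀.1
    have hℓ0 : ℓ 0 = lab c p := by simp [hℓ]
    have hℓs : ∀ t, 1 ≤ t → ℓ t = ℓ₀ (t - 1) := by
      intro t ht
      simp only [hℓ]
      rw [if_neg (by omega : ¬ t = 0)]
    have hsc : IsSatChain n (k₀ + 1) f c d := by
      refine ⟨hf0, ?_, ?_⟩
      · rw [hfs (k₀ + 1) (by omega)]
        simpa using hsc₀.2.1
      · intro t ht
        by_cases ht0 : t = 0
        · subst ht0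
          rw [hf0, hf1]
          exact hcov
        · rw [hfs t (by omega), hfs (t + 1) (by omega)]
          have := hsc₀.2.2 (t - 1) (by omega)
          rw [show t - 1 + 1 = t + 1 - 1 by omega] at this
          exact this
    have hlw : IsLabelWord n (k₀ + 1) f ℓ := by
      intro t ht
      by_cases ht0 : t = 0
      · subst ht0
        refine ⟨p, ?_, ?_, ?_⟩
        · rw [hf0, hf1, hep]; omega
        · intro j hj
          rw [hf0, hf1, hej j hj]
        · rw [hℓ0, hf0]
          rfl
      · obtain ⟨i, hi1, hi2, hi3⟩ := hlw₀ (t - 1) (by omega)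
        refine ⟨i, ?_, ?_, ?_⟩
        · rw [hfs t (by omega), hfs (t + 1) (by omega), show t + 1 - 1 = t - 1 + 1 by omega]
          exact hi1
        · intro j hj
          rw [hfs t (by omega), hfs (t + 1) (by omega), show t + 1 - 1 = t - 1 + 1 by omega]
          exact hi2 j hj
        · rw [hℓs t (by omega), hfs t (by omega)]
          exact hi3
    have hinc : ∀ t, t + 1 < k₀ + 1 → Lt3 (ℓ t) (ℓ (t + 1)) := by
      intro t ht
      by_cases ht0 : t = 0
      · subst ht0
        rw [hℓ0, hℓs 1 (by omega)]
        obtain ⟨j, hj1, hj2⟩ := hfirst₀ (by omega)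
        rw [show (1:ℕ) - 1 = 0 by rfl, hj1]
        by_cases hjp : j = p
        · subst hjp
          exact lab_lt_same c e j (by rw [hep]; omega)
        · have hejj : e j = c j := hej j hjp
          have : lab e j = lab c j := by simp [lab, hejj]
          rw [this]
          exact hminlab j hjp (by rw [← hejj]; exact hj2)
      · rw [hℓs t (by omega), hℓs (t + 1) (by omega), show t + 1 - 1 = t - 1 + 1 by omega]
        exact hinc₀ (t - 1) (by omega)
    -- dichotomy for the first step of any competing chain
    have hdich : ∀ k' f' ℓ', IsSatChain n k' f' c d → IsLabelWord n k' f' ℓ' → 0 < k' →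
        (f' 1 = e ∧ ℓ' 0 = lab c p) ∨
        (∃ j₀ : Fin (n - 1), j₀ ≠ p ∧ ℓ' 0 = lab c j₀ ∧ c j₀ < d j₀ ∧ f' 1 p = c p) := by
      intro k' f' ℓ' hsc' hlw' hk
      obtain ⟨j₀, hj1, hj2, hj3⟩ := hlw' 0 hk
      simp only [Nat.zero_add] at hj1 hj2 hj3
      have hf'0 : f' 0 = c := hsc'.1
      rw [hf'0] at hj1 hj2 hj3
      have hcov' := hsc'.2.2 0 hk
      have hcov'' : CCCovers n c (f' 1) := by rw [← hf'0]; simpa using hcov'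
      have h1d : ∀ j, f' 1 j ≤ d j := fun j => chain_le hsc' 1 hk j
      by_cases hj₀ : j₀ = p
      · subst hj₀
        left
        have hfix : ∀ j, j ≠ j₀ → f' 1 j = c j := fun j hj => (hj2 j hj).symm
        have hCC1 : IsCC n (f' 1) := hcov''.2.1
        have ht₁ex : ∃ m : ℕ, (m : ℤ) = f' 1 j₀ - c j₀ :=
          ⟨(f' 1 j₀ - c j₀).toNat, Int.toNat_of_nonneg (by omega)⟩
        obtain ⟨t₁, ht₁⟩ := ht₁ex
        have heq1 : Function.update c j₀ (c j₀ + ((t₁ : ℕ) : ℤ)) = f' 1 := by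
          funext j
          by_cases hj : j = j₀
          · subst hj; rw [Function.update_self]; omega
          · rw [Function.update_of_ne hj]; exact (hfix j hj).symm
        have hn1 : ¬ t₁ < δN := by
          intro hlt2
          exact hδmin t₁ hlt2 ⟨by omega, by rw [heq1]; exact hCC1⟩
        have hn2 : ¬ δN < t₁ := by
          intro hlt2
          apply hcov''.2.2.2.2
          refine ⟨e, hCCe, ?_, ?_, ?_, ?_⟩
          · exact hce
          · intro j
            show e j ≤ f' 1 j
            by_cases hj : j = j₀
            · subst hj; rw [hep]; omega
            · rw [hej j hj, hfix j hj]
          · exact Ne.symm hcne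
          · intro h
            have := congrFun h j₀
            rw [hep] at this
            omega
        have ht₁δ : t₁ = δN := by omega
        constructor
        · rw [← heq1, ht₁δ, ← he]
        · rw [hj3]; rfl
      · right
        refine ⟨j₀, hj₀, by rw [hj3]; rfl, ?_, (hj2 p (fun h => hj₀ h.symm)).symm⟩
        have h2 := h1d j₀
        omega
    refine ⟨k₀ + 1, f, ℓ, hsc, hlw, hinc, ?_, ?_, ?_, ?_⟩
    · -- uniqueness
      intro k' f' ℓ' hsc' hlw' hinc'
      have hk : 0 < k' := by
        rcases Nat.eq_zero_or_pos k' with h0 | h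
        · exfalso
          apply hcd
          rw [← hsc'.1, ← hsc'.2.1, h0]
        · exact h
      rcases hdich k' f' ℓ' hsc' hlw' hk with ⟨hfe, hl0⟩ | ⟨j₀, hj₀, hl0, hjd, hf1p⟩
      · have hsc'' : IsSatChain n (k' - 1) (fun t => f' (t + 1)) e d := by
          refine ⟨hfe, ?_, ?_⟩
          · show f' (k' - 1 + 1) = d
            rw [Nat.sub_add_cancel hk]
            exact hsc'.2.1
          · intro t ht
            exact hsc'.2.2 (t + 1) (by omega)
        have hlw'' : IsLabelWord n (k' - 1) (fun t => f' (t + 1)) (fun t => ℓ' (t + 1)) :=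
          fun t ht => hlw' (t + 1) (by omega)
        have hinc'' : ∀ t, t + 1 < k' - 1 → Lt3 (ℓ' (t + 1)) (ℓ' (t + 1 + 1)) :=
          fun t ht => hinc' (t + 1) (by omega)
        obtain ⟨hkeq, hfeq⟩ := huniq₀ (k' - 1) _ _ hsc'' hlw'' hinc''
        refine ⟨by omega, ?_⟩
        intro t ht
        by_cases ht0 : t = 0
        · subst ht0
          rw [hf0]
          exact hsc'.1
        · have h2 := hfeq (t - 1) (by omega)
          rw [show t - 1 + 1 = t by omega] at h2
          rw [hfs t (by omega)]
          exact h2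
      · -- contradiction with increasing
        exfalso
        have hexQ : ∃ t, f' t p ≠ c p := by
          refine ⟨k', ?_⟩
          have h3 := congrFun hsc'.2.1 p
          omega
        have ht₁ex : ∃ m, (f' m p ≠ c p) ∧ ∀ s, s < m → ¬ f' s p ≠ c p :=
          ⟨Nat.find hexQ, Nat.find_spec hexQ, fun s hs => Nat.find_min hexQ hs⟩
        obtain ⟨t₁, ht₁spec, ht₁min⟩ := ht₁ex
        have ht₁min : ∀ s < t₁, f' s p = c p := fun s hs => not_not.mp (ht₁min s hs)
        have ht₁le : t₁ ≤ k' := by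
          by_contra h
          have h2 : f' k' p = c p := ht₁min k' (by omega)
          have h3 := congrFun hsc'.2.1 p
          omega
        have ht₁pos : 0 < t₁ := by
          rcases Nat.eq_zero_or_pos t₁ with h0 | h
          · exfalso; apply ht₁spec; rw [h0]; exact congrFun hsc'.1 p
          · exact h
        have ht₁2 : 2 ≤ t₁ := by
          rcases Nat.lt_or_ge t₁ 2 with h | h
          · exfalso
            have : t₁ = 1 := by omega
            rw [this] at ht₁spec
            exact ht₁spec hf1p
          · exact h
        obtain ⟨i, hi1, hi2, hi3⟩ := hlw' (t₁ - 1) (by omega)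
        have hip : i = p := by
          by_contra hip
          have h2 := hi2 p (fun h => hip h.symm)
          rw [show t₁ - 1 + 1 = t₁ by omega] at h2
          apply ht₁spec
          rw [← h2]
          exact ht₁min (t₁ - 1) (by omega)
        subst hip
        have hval : f' (t₁ - 1) i = c i := ht₁min (t₁ - 1) (by omega)
        have hlt₁ : ℓ' (t₁ - 1) = lab c i := by
          rw [hi3, hval]; rfl
        have hmono := lt3_chain ℓ' hinc' 0 (t₁ - 1) (by omega) (by omega)
        rw [hl0, hlt₁] at hmono
        exact lt3_asymm hmono (hminlab j₀ hj₀ hjd)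
    · -- lexicographic minimality
      intro k' f' ℓ' hsc' hlw'
      have hk : 0 < k' := by
        rcases Nat.eq_zero_or_pos k' with h0 | h
        · exfalso
          apply hcd
          rw [← hsc'.1, ← hsc'.2.1, h0]
        · exact h
      rcases hdich k' f' ℓ' hsc' hlw' hk with ⟨hfe, hl0⟩ | ⟨j₀, hj₀, hl0, hjd, _⟩
      · have hsc'' : IsSatChain n (k' - 1) (fun t => f' (t + 1)) e d := by
          refine ⟨hfe, ?_, ?_⟩
          · show f' (k' - 1 + 1) = d
            rw [Nat.sub_add_cancel hk]
            exact hsc'.2.1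
          · intro t ht
            exact hsc'.2.2 (t + 1) (by omega)
        have hlw'' : IsLabelWord n (k' - 1) (fun t => f' (t + 1)) (fun t => ℓ' (t + 1)) :=
          fun t ht => hlw' (t + 1) (by omega)
        rcases hmin₀ (k' - 1) _ _ hsc'' hlw'' with ⟨hlen, hpre⟩ | ⟨t, ht1, ht2, hpre, hltt⟩
        · left
          refine ⟨by omega, ?_⟩
          intro t ht
          by_cases ht0 : t = 0
          · subst ht0
            rw [hℓ0, hl0]
          · have h2 := hpre (t - 1) (by omega)
            simp only at h2
            rw [show t - 1 + 1 = t by omega] at h2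
            rw [hℓs t (by omega)]
            exact h2
        · right
          refine ⟨t + 1, by omega, by omega, ?_, ?_⟩
          · intro s hs
            by_cases hs0 : s = 0
            · subst hs0
              rw [hℓ0, hl0]
            · have h2 := hpre (s - 1) (by omega)
              simp only at h2
              rw [show s - 1 + 1 = s by omega] at h2
              rw [hℓs s (by omega)]
              exact h2
          · have h2 := hltt
            simp only at h2
            rw [hℓs (t + 1) (by omega)]
            simpa using h2
      · right
        refine ⟨0, by omega, hk, fun s hs => absurd hs (by omega), ?_⟩
        rw [hℓ0, hl0]
        exact hminlab j₀ hj₀ hjd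
    · exact ⟨fun h => absurd h (by omega), fun h => absurd h hcd⟩
    · intro _
      exact ⟨p, hℓ0, hpd⟩

/-- The labeling `λ(c,c') = (ε, i, c_i)` is an EL-labeling of `CC(n)`: between any pair
`c ≤ c'` there is exactly one increasing saturated chain, and it is lexicographically
minimal among all saturated chains from `c` to `c'`. -/
theorem stmt19 (n : ℕ) (c c' : Fin (n - 1) → ℤ) (hc : IsCC n c) (hc' : IsCC n c')
    (hle : c ≤ c') :
    ∃ k f ℓ, IsSatChain n k f c c' ∧ IsLabelWord n k f ℓ ∧
      (∀ t, t + 1 < k → Lt3 (ℓ t) (ℓ (t + 1))) ∧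
      (∀ k' f' ℓ', IsSatChain n k' f' c c' → IsLabelWord n k' f' ℓ' →
        (∀ t, t + 1 < k' → Lt3 (ℓ' t) (ℓ' (t + 1))) →
        k' = k ∧ ∀ t ≤ k, f' t = f t) ∧
      (∀ k' f' ℓ', IsSatChain n k' f' c c' → IsLabelWord n k' f' ℓ' →
        LexLE k k' ℓ ℓ') := by
  obtain ⟨k, f, ℓ, h1, h2, h3, h4, h5, _, _⟩ :=
    main_good n (∑ a, (c' a - c a).toNat) c c' rfl hc hc' hle
  exact ⟨k, f, ℓ, h1, h2, h3, h4, h5⟩
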